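/- For every n ≥ 0, the coefficient f_n of x^n in F(x,q) satisfies f_n = ∑_{t=0}^{⌊n/2⌋} q^{(n−2t)(n−2t+1)/2 + t(t+1)} / ((q;q)_{n−2t} (q;q)_t). -/

import Mathlib

open Finset PowerSeries

/-- `(q;q)_n = ∏_{0 ≤ j < n} (1 - q^{j+1})`. -/
noncomputable def qPoch (n : ℕ) : PowerSeries ℚ :=
  ∏ j ∈ Finset.range n, (1 - (PowerSeries.X : PowerSeries ℚ) ^ (j + 1))

/-- The power series `q` in `ℚ⟦q⟧`. -/
noncomputable def qq : PowerSeries ℚ := PowerSeries.X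

/-- `G(x,q) = ∑_{s ≥ 0} q^{s(s+1)} x^{2s} / (q;q)_s`, as an element of `ℚ⟦q⟧⟦x⟧`:
the coefficient of `x^n` is `q^{s(s+1)}/(q;q)_s` if `n = 2s`, and `0` otherwise. -/
noncomputable def Gser : PowerSeries (PowerSeries ℚ) :=
  PowerSeries.mk fun n =>
    if 2 ∣ n then qq ^ ((n / 2) * (n / 2 + 1)) * (qPoch (n / 2))⁻¹ else 0

/-- The coefficient `f_n` of `x^n` in
`F(x,q) = ∑_{s,t,u ≥ 0} q^{s(s+1)/2 + t(t+1) + 3u(u+1)/2 + st + su + 2tu}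
  x^{s+2t+3u}/((q;q)_s (q;q)_t (q;q)_u)`,
i.e. the (finite) sum over `s, t, u ≥ 0` with `s + 2t + 3u = n`. -/
noncomputable def fcoef (n : ℕ) : PowerSeries ℚ :=
  ∑ t ∈ Finset.range (n / 2 + 1), ∑ u ∈ Finset.range (n / 3 + 1),
    if 2 * t + 3 * u ≤ n then
      qq ^ ((n - 2 * t - 3 * u) * (n - 2 * t - 3 * u + 1) / 2 + t * (t + 1) +
            3 * (u * (u + 1) / 2) + (n - 2 * t - 3 * u) * t +
            (n - 2 * t - 3 * u) * u + 2 * t * u) *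
        (qPoch (n - 2 * t - 3 * u))⁻¹ * (qPoch t)⁻¹ * (qPoch u)⁻¹
    else 0

/-- `F(x,q)` as an element of `ℚ⟦q⟧⟦x⟧`. -/
noncomputable def Fser : PowerSeries (PowerSeries ℚ) :=
  PowerSeries.mk fcoef

/-!
Put `T = t + u` and `S = s + u`. The exponent of a term of `f_n` becomes
`S(S+1)/2 + T(T+1) + st`, so `f_n = ∑_{S+2T=n} q^{S(S+1)/2 + T(T+1)} ∑_u q^{(S-u)(T-u)} /
((q;q)_{S-u} (q;q)_{T-u} (q;q)_u)`, and the inner sum is `1/((q;q)_S (q;q)_T)` by the Durfee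
rectangle identity. That identity follows by induction on `min(S, T)`: multiplying the sum for
`(S, T + 1)` by `1 - q^{T+1} = (1 - q^{T+1-u}) + q^{T+1-u}(1 - q^u)` gives the sum for `(S, T)`.
-/

lemma constantCoeff_qPoch (n : ℕ) : constantCoeff (qPoch n) = 1 := by
  simp [qPoch, map_prod]

lemma qPoch_ne_zero (n : ℕ) : qPoch n ≠ 0 := fun h => by
  simpa [h] using constantCoeff_qPoch n

lemma qPoch_zero : qPoch 0 = 1 := by simp [qPoch]

lemma qPoch_succ (k : ℕ) : qPoch (k + 1) = qPoch k * (1 - qq ^ (k + 1)) :=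
  prod_range_succ _ _

lemma one_sub_qq_pow_mul_inv_qPoch_succ (k : ℕ) :
    (1 - qq ^ (k + 1)) * (qPoch (k + 1))⁻¹ = (qPoch k)⁻¹ := by
  rw [qPoch_succ, PowerSeries.mul_inv_rev, ← mul_assoc,
    PowerSeries.mul_inv_cancel _ (by simp [qq]), one_mul]

/-- The sum over `u` in `inv_qPoch_mul_inv_qPoch` for `a = T + d ≥ b = T`, indexed by
`p = (u, T - u)` to avoid truncated subtraction. -/
noncomputable def durfeeSum (d T : ℕ) : PowerSeries ℚ :=
  ∑ p ∈ antidiagonal T,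
    qq ^ ((p.2 + d) * p.2) * (qPoch (p.2 + d))⁻¹ * (qPoch p.2)⁻¹ * (qPoch p.1)⁻¹

lemma one_sub_qq_pow_succ_mul_durfeeSum_succ (d T : ℕ) :
    (1 - qq ^ (T + 1)) * durfeeSum d (T + 1) = durfeeSum (d + 1) T := by
  unfold durfeeSum
  set g : ℕ × ℕ → PowerSeries ℚ := fun p =>
    qq ^ ((p.2 + d) * p.2) * (qPoch (p.2 + d))⁻¹ * (qPoch p.2)⁻¹ * (qPoch p.1)⁻¹ with hg
  calc (1 - qq ^ (T + 1)) * ∑ p ∈ antidiagonal (T + 1), g p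
      = ∑ p ∈ antidiagonal (T + 1), (1 - qq ^ p.2) * g p +
          ∑ p ∈ antidiagonal (T + 1), qq ^ p.2 * (1 - qq ^ p.1) * g p := by
        rw [mul_sum, ← sum_add_distrib]
        refine sum_congr rfl fun p hp => ?_
        rw [← mem_antidiagonal.1 hp, pow_add]
        ring
    _ = ∑ p ∈ antidiagonal T, ((1 - qq ^ (p.2 + 1)) * g (p.1, p.2 + 1) +
          qq ^ p.2 * (1 - qq ^ (p.1 + 1)) * g (p.1 + 1, p.2)) := by
        rw [Nat.sum_antidiagonal_succ', Nat.sum_antidiagonal_succ, sum_add_distrib]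
        simp
    _ = _ := by
        refine sum_congr rfl fun p _ => ?_
        simp only [hg, Nat.add_right_comm _ 1 d, ← add_assoc]
        linear_combination
          (qq ^ ((p.2 + d + 1) * (p.2 + 1)) * (qPoch (p.2 + d + 1))⁻¹ * (qPoch p.1)⁻¹) *
              one_sub_qq_pow_mul_inv_qPoch_succ p.2 +
            (qq ^ p.2 * qq ^ ((p.2 + d) * p.2) * (qPoch (p.2 + d))⁻¹ * (qPoch p.2)⁻¹) *
              one_sub_qq_pow_mul_inv_qPoch_succ p.1 -
            (qq ^ ((p.2 + d + 1) * p.2) * (qPoch p.2)⁻¹ * (qPoch p.1)⁻¹) *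
              one_sub_qq_pow_mul_inv_qPoch_succ (p.2 + d)

theorem durfeeSum_eq (d T : ℕ) : durfeeSum d T = (qPoch (T + d))⁻¹ * (qPoch T)⁻¹ := by
  induction T generalizing d with
  | zero => simp [durfeeSum, qPoch_zero]
  | succ T ih =>
    have h : (1 - qq ^ (T + 1) : PowerSeries ℚ) ≠ 0 :=
      right_ne_zero_of_mul (qPoch_succ T ▸ qPoch_ne_zero (T + 1))
    apply mul_left_cancel₀ h
    rw [one_sub_qq_pow_succ_mul_durfeeSum_succ, ih, mul_left_comm,
      one_sub_qq_pow_mul_inv_qPoch_succ, add_right_comm T 1 d, add_assoc]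

theorem inv_qPoch_mul_inv_qPoch (a b : ℕ) :
    (qPoch a)⁻¹ * (qPoch b)⁻¹ = ∑ u ∈ range (min a b + 1),
      qq ^ ((a - u) * (b - u)) * (qPoch (a - u))⁻¹ * (qPoch (b - u))⁻¹ * (qPoch u)⁻¹ := by
  wlog hba : b ≤ a generalizing a b
  · rw [mul_comm, this b a (by omega), min_comm]
    exact sum_congr rfl fun u _ => by ring
  obtain ⟨d, rfl⟩ := Nat.exists_eq_add_of_le hba
  rw [min_eq_right hba, ← durfeeSum_eq, durfeeSum, Nat.sum_antidiagonal_eq_sum_range_succ_mk]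
  refine sum_congr rfl fun u hu => ?_
  rw [show b + d - u = b - u + d by have := mem_range.1 hu; omega]

lemma fcoef_exponent_eq (s t u : ℕ) :
    s * (s + 1) / 2 + t * (t + 1) + 3 * (u * (u + 1) / 2) + s * t + s * u + 2 * t * u =
    (s + u) * (s + u + 1) / 2 + (t + u) * (t + u + 1) + s * t := by
  have hsu : (s + u) * (s + u + 1) = s * (s + 1) + u * (u + 1) + 2 * (s * u) := by ring
  have htu : (t + u) * (t + u + 1) = t * (t + 1) + u * (u + 1) + 2 * (t * u) := by ring
  obtain ⟨a, ha⟩ := Nat.even_mul_succ_self s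
  obtain ⟨b, hb⟩ := Nat.even_mul_succ_self u
  rw [hsu, htu, ha, hb, mul_assoc 2 t u]
  omega

lemma fcoef_eq_sum_sigma (n : ℕ) :
    fcoef n = ∑ p ∈ (range (n / 2 + 1)).sigma fun T => range (min (n - 2 * T) T + 1),
      qq ^ ((n - 2 * p.1) * (n - 2 * p.1 + 1) / 2 + p.1 * (p.1 + 1) +
          (n - 2 * p.1 - p.2) * (p.1 - p.2)) *
        (qPoch (n - 2 * p.1 - p.2))⁻¹ * (qPoch (p.1 - p.2))⁻¹ * (qPoch p.2)⁻¹ := by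
  rw [fcoef, ← sum_product', ← sum_filter]
  refine sum_nbij' (fun p => ⟨p.1 + p.2, p.2⟩) (fun p => (p.1 - p.2, p.2)) ?_ ?_ ?_ ?_ ?_
  · intro p hp
    simp only [mem_filter, mem_product, mem_range, mem_sigma, Nat.lt_succ_iff, le_min_iff] at hp ⊢
    omega
  · intro p hp
    simp only [mem_filter, mem_product, mem_range, mem_sigma, Nat.lt_succ_iff, le_min_iff] at hp ⊢
    omega
  · intro p _
    simp only [Nat.add_sub_cancel]
  · rintro ⟨T, u⟩ hp
    simp only [mem_sigma, mem_range, Nat.lt_succ_iff, le_min_iff] at hp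
    exact Sigma.ext (Nat.sub_add_cancel hp.2.2) HEq.rfl
  · rintro ⟨t, u⟩ hp
    simp only [mem_filter, mem_product, mem_range, Nat.lt_succ_iff] at hp
    rw [show n - 2 * (t + u) = n - 2 * t - 3 * u + u by omega, Nat.add_sub_cancel,
      Nat.add_sub_cancel, fcoef_exponent_eq]

/-- `f_n = ∑_{t=0}^{⌊n/2⌋} q^{(n-2t)(n-2t+1)/2 + t(t+1)} / ((q;q)_{n-2t} (q;q)_t)`. -/
theorem fcoef_eq (n : ℕ) :
    fcoef n = ∑ t ∈ Finset.range (n / 2 + 1),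
      qq ^ ((n - 2 * t) * (n - 2 * t + 1) / 2 + t * (t + 1)) *
        (qPoch (n - 2 * t))⁻¹ * (qPoch t)⁻¹ := by
  rw [fcoef_eq_sum_sigma, sum_sigma]
  refine sum_congr rfl fun T _ => ?_
  rw [mul_assoc, inv_qPoch_mul_inv_qPoch, mul_sum]
  exact sum_congr rfl fun u _ => by ring
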